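/- For all real s, t: (k(s)e^t + k(−s))(t k(t) + 1) + (k(t)e^s + k(−t))(s k(s) + 1) ≥ 1/2, where k(t) := −1/t + (e^t − 1)/t² for t ≠ 0 and k(0) = 1/2. -/
import Mathlib

open Real

noncomputable def kfun (t : ℝ) : ℝ := if t = 0 then 1 / 2 else -1 / t + (Real.exp t - 1) / t ^ 2

lemma exp_quartic {x : ℝ} (hx : 0 ≤ x) :
    1 + x + x ^ 2 / 2 + x ^ 3 / 6 + x ^ 4 / 24 ≤ Real.exp x := by
  have h := Real.sum_le_exp_of_nonneg hx 5
  simp [Finset.sum_range_succ, Nat.factorial] at h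
  linarith

lemma kfun_eq {t : ℝ} (ht : t ≠ 0) : kfun t = (Real.exp t - 1 - t) / t ^ 2 := by
  rw [kfun, if_neg ht]
  field_simp
  ring

lemma kfun_pos (t : ℝ) : 0 < kfun t := by
  rcases eq_or_ne t 0 with h | h
  · simp [kfun, h]
  · rw [kfun_eq h]
    have := Real.add_one_lt_exp h
    have ht2 : 0 < t ^ 2 := by positivity
    apply div_pos <;> nlinarith

lemma gfun_eq {t : ℝ} (ht : t ≠ 0) : t * kfun t + 1 = (Real.exp t - 1) / t := by
  rw [kfun_eq ht]
  field_simp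
  ring

lemma gfun_pos (t : ℝ) : 0 < t * kfun t + 1 := by
  rcases eq_or_ne t 0 with h | h
  · simp [h]
  · rw [gfun_eq h]
    rcases lt_or_gt_of_ne h with h0 | h0
    · have : Real.exp t < 1 := by
        calc Real.exp t < Real.exp 0 := Real.exp_lt_exp.mpr h0
        _ = 1 := Real.exp_zero
      exact div_pos_of_neg_of_neg (by linarith) h0
    · have := Real.add_one_lt_exp (ne_of_gt h0)
      exact div_pos (by linarith) h0

lemma key_neg (u : ℝ) (hu0 : 0 < u) :
    1 / 4 ≤ (Real.exp u - 1 - u) / u ^ 2 * ((Real.exp (-u) - 1) / -u) := by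
  have hE : 1 + u + u ^ 2 / 2 + u ^ 3 / 6 + u ^ 4 / 24 ≤ Real.exp u := exp_quartic hu0.le
  have hFpos : 0 < Real.exp (-u) := Real.exp_pos _
  have hF : Real.exp (-u) * Real.exp u = 1 := by
    rw [← Real.exp_add]; simp
  have hF2 : Real.exp (-u) * (1 + u) ≤ 1 := by
    calc Real.exp (-u) * (1 + u) ≤ Real.exp (-u) * Real.exp u :=
      mul_le_mul_of_nonneg_left (by nlinarith) hFpos.le
    _ = 1 := hF
  have heq : (Real.exp u - 1 - u) / u ^ 2 * ((Real.exp (-u) - 1) / -u)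
      = (Real.exp u - 1 - u) * (1 - Real.exp (-u)) / u ^ 3 := by
    field_simp
    ring
  rw [heq, le_div_iff₀ (by positivity)]
  have hPQ : u ^ 2 / 2 + u ^ 3 / 6 + u ^ 4 / 24 ≤ Real.exp u - 1 - u := by linarith
  have h1 : u ≤ (1 - Real.exp (-u)) * (1 + u) := by nlinarith
  have hFle : Real.exp (-u) ≤ 1 := by nlinarith
  have hprod : (u ^ 2 / 2 + u ^ 3 / 6 + u ^ 4 / 24) * u
      ≤ (Real.exp u - 1 - u) * ((1 - Real.exp (-u)) * (1 + u)) :=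
    mul_le_mul hPQ h1 hu0.le (le_trans (by positivity) hPQ)
  nlinarith [sq_nonneg (u - 1), mul_pos (mul_pos hu0 hu0) hu0,
    mul_pos (mul_pos (mul_pos hu0 hu0) hu0) hu0]

lemma key (t : ℝ) : 1 / 4 ≤ kfun (-t) * (t * kfun t + 1) := by
  rcases eq_or_ne t 0 with h | h
  · norm_num [h, kfun]
  · have hnt : -t ≠ 0 := neg_ne_zero.mpr h
    rw [kfun_eq hnt, gfun_eq h]
    rcases lt_or_gt_of_ne h with h0 | h0
    · simpa using key_neg (-t) (by linarith)
    · rw [neg_sq]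
      rcases le_or_gt t 2 with h2 | h2
      · have h1 : 1 - t / 2 ≤ Real.exp (-(t / 2)) := by
          have := Real.add_one_le_exp (-(t / 2)); linarith
        have h1' : (0:ℝ) ≤ 1 - t / 2 := by linarith
        have hq : (1 - t / 2) ^ 2 ≤ Real.exp (-t) := by
          have hh : Real.exp (-(t / 2)) ^ 2 = Real.exp (-t) := by
            rw [sq, ← Real.exp_add]; ring_nf
          nlinarith [Real.exp_pos (-(t / 2))]
        have hl : t + 1 ≤ Real.exp t := Real.add_one_le_exp t
        rw [div_mul_div_comm, le_div_iff₀ (by positivity)]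
        have hA : t ^ 2 / 4 ≤ Real.exp (-t) - 1 + t := by nlinarith
        have hB : t ≤ Real.exp t - 1 := by linarith
        have := mul_le_mul hA hB h0.le (by nlinarith)
        nlinarith
      · have hE : 1 + t + t ^ 2 / 2 + t ^ 3 / 6 + t ^ 4 / 24 ≤ Real.exp t := exp_quartic (by linarith)
        have hFpos : 0 < Real.exp (-t) := Real.exp_pos _
        rw [div_mul_div_comm, le_div_iff₀ (by positivity)]
        have hA : (1:ℝ) ≤ Real.exp (-t) - 1 + t := by linarith
        have hB : t ^ 3 / 4 ≤ Real.exp t - 1 := by nlinarith [mul_pos (mul_pos (mul_pos h0 h0) h0) (by linarith : (0:ℝ) < t - 2)]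
        have := mul_le_mul hA hB (by positivity) (by linarith)
        nlinarith

theorem kfun_ineq (s t : ℝ) :
    (kfun s * Real.exp t + kfun (-s)) * (t * kfun t + 1)
      + (kfun t * Real.exp s + kfun (-t)) * (s * kfun s + 1) ≥ 1 / 2 := by
  have ks := kfun_pos s
  have kt := kfun_pos t
  have kns := kfun_pos (-s)
  have knt := kfun_pos (-t)
  have gs := gfun_pos s
  have gt := gfun_pos t
  have hs := key s
  have ht := key t
  have es := Real.exp_pos s
  have et := Real.exp_pos t
  have h14 : 1 / 16 ≤ (kfun (-s) * (s * kfun s + 1)) * (kfun (-t) * (t * kfun t + 1)) := by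
    nlinarith [mul_le_mul hs ht (by norm_num) (by positivity)]
  have hx : 0 < kfun (-s) * (t * kfun t + 1) + kfun (-t) * (s * kfun s + 1) := by positivity
  have hmain : 1 / 2 ≤ kfun (-s) * (t * kfun t + 1) + kfun (-t) * (s * kfun s + 1) := by
    nlinarith [sq_nonneg (kfun (-s) * (t * kfun t + 1) - kfun (-t) * (s * kfun s + 1)), hx, h14]
  nlinarith [hmain, mul_pos (mul_pos ks et) gt, mul_pos (mul_pos kt es) gs]
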